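/- The presented group ⟨a, b | (ab)² = (ba)² = e⟩ (with relators (ab)² and (ba)²) is big, i.e. it contains a subgroup which is free of rank 2. -/

import Mathlib

/-!
Writing `t = ab`, the relator `(ba)² = a⁻¹ (ab)² a` is redundant, so a homomorphism out of the
group only needs images `x` of `a` and `s` of `t` with `s² = 1`, and then `a ↦ x`,
`b ↦ x⁻¹ s`. Take the holomorph `F ⋊ Aut F` of the free group `F` on `u, v`, with `x = u` and
`s` the automorphism swapping `u` and `v`. Then `t a t⁻¹` maps to `s u s⁻¹ = v`, so the subgroup
generated by `a` and `t a t⁻¹` maps isomorphically onto `F`.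
-/

/-- A group `G` is big if it contains a free subgroup of rank 2, i.e. there is an
injective group homomorphism from the free group on two generators into `G`. -/
def Big (G : Type*) [Group G] : Prop :=
  ∃ f : FreeGroup (Fin 2) →* G, Function.Injective f

/-- The relators `(ab)²` and `(ba)²` of the presentation `⟨a, b | (ab)² = (ba)² = e⟩`. -/
def rels : Set (FreeGroup (Fin 2)) :=
  {(FreeGroup.of 0 * FreeGroup.of 1) ^ 2, (FreeGroup.of 1 * FreeGroup.of 0) ^ 2}

theorem sq_mul_comm_eq_one {G : Type*} [Group G] {x y : G} (h : (x * y) ^ 2 = 1) :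
    (y * x) ^ 2 = 1 :=
  calc (y * x) ^ 2 = x⁻¹ * (x * y) ^ 2 * x := by simp only [sq]; group
    _ = 1 := by rw [h]; group

theorem lift_eq_one_of_mem_rels {H : Type*} [Group H] {x y : H} (h : (x * y) ^ 2 = 1) :
    ∀ r ∈ rels, FreeGroup.lift ![x, y] r = 1 := by
  rintro r (rfl | rfl) <;> simp [h, sq_mul_comm_eq_one h]

theorem big_presentedGroup_rels_of_involution {H : Type*} [Group H] (x s : H) (hs : s ^ 2 = 1)
    (hfree : Function.Injective (FreeGroup.lift ![x, s * x * s⁻¹])) :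
    Big (PresentedGroup rels) := by
  have hxy : (x * (x⁻¹ * s)) ^ 2 = 1 := by rwa [mul_inv_cancel_left]
  let φ : PresentedGroup rels →* H := PresentedGroup.toGroup (lift_eq_one_of_mem_rels hxy)
  let t : PresentedGroup rels := PresentedGroup.of 0 * PresentedGroup.of 1
  let ψ : FreeGroup (Fin 2) →* PresentedGroup rels :=
    FreeGroup.lift ![PresentedGroup.of 0, t * PresentedGroup.of 0 * t⁻¹]
  have hφt : φ t = s := by simp [φ, t, PresentedGroup.toGroup.of]
  have hcomp : φ.comp ψ = FreeGroup.lift ![x, s * x * s⁻¹] := by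
    ext i
    fin_cases i <;> simp [ψ, φ, hφt, PresentedGroup.toGroup.of]
  refine ⟨ψ, Function.Injective.of_comp (f := φ) ?_⟩
  rwa [← MonoidHom.coe_comp, hcomp]

def swapGenerators : MulAut (FreeGroup (Fin 2)) :=
  FreeGroup.freeGroupCongr (Equiv.swap 0 1)

theorem swapGenerators_sq : swapGenerators ^ 2 = 1 := by
  apply MulEquiv.toMonoidHom_injective
  ext i
  fin_cases i <;> rfl

abbrev Holomorph (N : Type*) [Group N] := N ⋊[MonoidHom.id (MulAut N)] MulAut N

open SemidirectProduct in
theorem lift_conj_swapGenerators_eq_inl :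
    FreeGroup.lift ![(inl (FreeGroup.of 0) : Holomorph (FreeGroup (Fin 2))),
      inr swapGenerators * inl (FreeGroup.of 0) * (inr swapGenerators)⁻¹] = inl := by
  refine FreeGroup.ext_hom _ _ fun i => ?_
  fin_cases i
  · rfl
  · simp [← map_inv, ← inl_aut, swapGenerators]

/-- The group `⟨a, b | (ab)² = (ba)² = e⟩` is big. -/
theorem presentedGroup_big : Big (PresentedGroup rels) := by
  have hs : (SemidirectProduct.inr swapGenerators : Holomorph (FreeGroup (Fin 2))) ^ 2 = 1 := by
    rw [← map_pow, swapGenerators_sq, map_one]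
  refine big_presentedGroup_rels_of_involution (.inl (FreeGroup.of 0)) _ hs ?_
  rw [lift_conj_swapGenerators_eq_inl]
  exact SemidirectProduct.inl_injective
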